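/- arXiv:1507.00498 — 3 statements merged into one kernel-verified Lean document; each statement's English description precedes it below -/
import Mathlib

section
/- For any positive integers Δ and n, the sum over a from 1 to Δ of e^{2πi a n/Δ} equals Δ if Δ divides n, and 0 otherwise. -/
open Complex Finset

theorem sum_Icc_one_eq_sum_range {M : Type*} [AddCommMonoid M] {f : ℕ → M} {m : ℕ}
    (hf : f m = f 0) : ∑ a ∈ Icc 1 m, f a = ∑ a ∈ range m, f a := by
  cases m with
  | zero => rfl
  | succ k =>
    rw [range_eq_Ico, sum_eq_sum_Ico_succ_bot k.succ_pos, ← Ico_add_one_right_eq_Icc,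
      sum_Ico_succ_top (Nat.le_add_left 1 k), hf, add_comm]

theorem geom_sum_eq_ite_of_pow_eq_one {R : Type*} [CommRing R] [IsDomain R] [DecidableEq R]
    {ζ : R} {m : ℕ} (h : ζ ^ m = 1) :
    ∑ a ∈ range m, ζ ^ a = if ζ = 1 then (m : R) else 0 := by
  split_ifs with hζ
  · simp [hζ]
  · have hmul : (∑ a ∈ range m, ζ ^ a) * (ζ - 1) = 0 := by rw [geom_sum_mul, h, sub_self]
    exact (mul_eq_zero.mp hmul).resolve_right (sub_ne_zero.mpr hζ)

theorem roots_of_unity_orthogonality_general (Δ n : ℕ) :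
    ∑ a ∈ Finset.Icc 1 Δ, Complex.exp (2 * Real.pi * Complex.I * a * n / Δ) =
      if (Δ : ℕ) ∣ n then (Δ : ℂ) else 0 := by
  rcases Nat.eq_zero_or_pos Δ with rfl | hΔ
  · simp -- the sum is empty and both branches of the `if` are `(0 : ℂ)`
  have hω := isPrimitiveRoot_exp Δ hΔ.ne'
  set ω := exp (2 * Real.pi * I / Δ)
  have hterm (a : ℕ) : exp (2 * Real.pi * I * a * n / Δ) = (ω ^ n) ^ a := by
    rw [← pow_mul, ← exp_nat_mul]
    push_cast
    ring_nf
  have hperiod : (ω ^ n) ^ Δ = 1 := by rw [← pow_mul, mul_comm, pow_mul, hω.pow_eq_one, one_pow]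
  simp only [hterm]
  rw [sum_Icc_one_eq_sum_range (by rw [hperiod, pow_zero]), geom_sum_eq_ite_of_pow_eq_one hperiod]
  simp only [hω.pow_eq_one_iff_dvd]

theorem roots_of_unity_orthogonality (Δ n : ℕ) (hΔ : 0 < Δ) (hn : 0 < n) :
    ∑ a ∈ Finset.Icc 1 Δ, Complex.exp (2 * Real.pi * Complex.I * a * n / Δ) =
      if (Δ : ℕ) ∣ n then (Δ : ℂ) else 0 :=
  roots_of_unity_orthogonality_general Δ n
end

section
/- Let W be a square complex matrix of size d×d, suppose π : ℕ → ℕ satisfies n·π(n) = Σ_{d'|n} μ(d')·tr(W^{n/d'}) for all n ≥ 1 (where μ is the Möbius function), and suppose every eigenvalue λ of W satisfies |λ| ≤ 1/R for some real 0 < R < 1. Then for all n ≥ 1, |n·π(n) − tr(W^n)| ≤ d·n·(1/R)^{n/2}. -/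
/-!
Splitting off the divisor `1`, `n π(n) - tr(W^n)` is the sum of `μ(k) tr(W^(n/k))` over the
divisors `k ≥ 2` of `n`, so only powers `W^m` with `2m ≤ n` occur. Decomposing `ℂ^d` into the
generalized eigenspaces of `W` gives `tr(W^m) = ∑ λ^m dim V_λ`, hence `|tr(W^m)| ≤ d R^(-m)`,
which is at most `d R^(-n/2)` because `R⁻¹ ≥ 1`; and `n` has at most `n` divisors.
-/

open Finset Module Module.End

namespace Module.End

variable {K V : Type*} [Field K] [AddCommGroup V] [Module K V] [FiniteDimensional K V]

lemma finite_maxGenEigenspace_ne_bot (f : End K V) : {μ | f.maxGenEigenspace μ ≠ ⊥}.Finite :=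
  WellFoundedGT.finite_ne_bot_of_iSupIndep f.independent_maxGenEigenspace

lemma trace_restrict_maxGenEigenspace_pow (f : End K V) (μ : K) (k : ℕ) :
    LinearMap.trace K _ (f.restrict (f.mapsTo_maxGenEigenspace_of_comm rfl μ) ^ k) =
      μ ^ k * finrank K (f.maxGenEigenspace μ) := by
  induction k with
  | zero => simp
  | succ k ih =>
    rw [pow_succ, mul_eq_comp, LinearMap.trace_comp_eq_mul_of_commute_of_isNilpotent μ
      ((Commute.refl _).pow_left k) (f.isNilpotent_restrict_maxGenEigenspace_sub_algebraMap μ),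
      ih, pow_succ]
    ring

lemma trace_pow_eq_sum_maxGenEigenspace [IsAlgClosed K] (f : End K V) (k : ℕ) :
    LinearMap.trace K V (f ^ k) = ∑ μ ∈ f.finite_maxGenEigenspace_ne_bot.toFinset,
      μ ^ k * finrank K (f.maxGenEigenspace μ) := by
  classical
  have hmaps (μ : K) := f.mapsTo_maxGenEigenspace_of_comm ((Commute.refl f).pow_right k) μ
  have hsum := DirectSum.isInternal_submodule_of_iSupIndep_of_iSup_eq_top
    f.independent_maxGenEigenspace f.iSup_maxGenEigenspace_eq_top
  rw [LinearMap.trace_eq_sum_trace_restrict' hsum f.finite_maxGenEigenspace_ne_bot hmaps]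
  refine sum_congr rfl fun μ _ ↦ ?_
  rw [← trace_restrict_maxGenEigenspace_pow]
  exact congrArg _ (pow_restrict k _ (hmaps μ)).symm

end Module.End

lemma Module.End.norm_trace_pow_le {V : Type*} [AddCommGroup V] [Module ℂ V]
    [FiniteDimensional ℂ V] (f : End ℂ V) {C : ℝ} (hC : ∀ μ ∈ spectrum ℂ f, ‖μ‖ ≤ C)
    (k : ℕ) :
    ‖LinearMap.trace ℂ V (f ^ k)‖ ≤ finrank ℂ V * C ^ k := by
  set s := f.finite_maxGenEigenspace_ne_bot.toFinset
  have hdim : ∑ μ ∈ s, (finrank ℂ (f.maxGenEigenspace μ) : ℝ) = finrank ℂ V := by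
    have h := f.trace_pow_eq_sum_maxGenEigenspace 0
    simp only [pow_zero, LinearMap.trace_one, one_mul] at h
    exact_mod_cast h.symm
  have hs : ∀ μ ∈ s, ‖μ‖ ≤ C := fun μ hμ ↦ hC μ <| hasEigenvalue_iff_mem_spectrum.mp <|
    HasUnifEigenvalue.lt (k := ⊤) zero_lt_one
      (f.finite_maxGenEigenspace_ne_bot.mem_toFinset.mp hμ)
  calc ‖LinearMap.trace ℂ V (f ^ k)‖
      ≤ ∑ μ ∈ s, ‖μ ^ k * finrank ℂ (f.maxGenEigenspace μ)‖ := by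
        rw [f.trace_pow_eq_sum_maxGenEigenspace]; exact norm_sum_le _ _
    _ ≤ ∑ μ ∈ s, C ^ k * finrank ℂ (f.maxGenEigenspace μ) := by
        gcongr with μ hμ
        rw [norm_mul, norm_pow, Complex.norm_natCast]
        gcongr
        exact hs μ hμ
    _ = finrank ℂ V * C ^ k := by rw [← mul_sum, hdim, mul_comm]

lemma Matrix.norm_trace_pow_le {n : Type*} [Fintype n] [DecidableEq n] (A : Matrix n n ℂ)
    {C : ℝ} (hC : ∀ μ ∈ spectrum ℂ A, ‖μ‖ ≤ C) (k : ℕ) :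
    ‖(A ^ k).trace‖ ≤ Fintype.card n * C ^ k := by
  have h := Module.End.norm_trace_pow_le (Matrix.toLin' A) (by rwa [Matrix.spectrum_toLin']) k
  rwa [← Matrix.toLin'_pow, Matrix.trace_toLin'_eq, finrank_fintype_fun_eq_card] at h

lemma pow_le_rpow_div_two {x : ℝ} (hx : 1 ≤ x) {m n : ℕ} (h : 2 * m ≤ n) :
    x ^ m ≤ x ^ ((n : ℝ) / 2) := by
  rw [← Real.rpow_natCast]
  refine Real.rpow_le_rpow_of_exponent_le hx ?_
  rw [le_div_iff₀ two_pos]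
  exact_mod_cast (by omega : m * 2 ≤ n)

lemma norm_sum_divisors_erase_one_moebius_mul_le {a : ℕ → ℂ} {B : ℝ} {n : ℕ}
    (ha : ∀ m, 2 * m ≤ n → ‖a m‖ ≤ B) :
    ‖∑ k ∈ n.divisors.erase 1, (ArithmeticFunction.moebius k : ℂ) * a (n / k)‖ ≤ n * B := by
  have hB : 0 ≤ B := (norm_nonneg _).trans (ha 0 (Nat.zero_le _))
  have hterm : ∀ k ∈ n.divisors.erase 1,
      ‖(ArithmeticFunction.moebius k : ℂ) * a (n / k)‖ ≤ B := by
    intro k hk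
    obtain ⟨hk1, hkn⟩ := mem_erase.mp hk
    have hk2 : 2 ≤ k := by have := Nat.pos_of_mem_divisors hkn; omega
    rw [norm_mul, Complex.norm_intCast, ← one_mul B]
    gcongr
    · exact_mod_cast ArithmeticFunction.abs_moebius_le_one
    · exact ha _ <| (Nat.mul_le_mul_left 2 (Nat.div_le_div_left hk2 two_pos)).trans
        (Nat.mul_div_le n 2)
  calc _ ≤ #(n.divisors.erase 1) * B := norm_sum_le_of_le _ hterm |>.trans_eq (by simp)
    _ ≤ n * B := by
      gcongr
      exact_mod_cast (card_erase_le.trans n.card_divisors_le_self)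

theorem keylemma_c_bound (d : ℕ) (W : Matrix (Fin d) (Fin d) ℂ) (π : ℕ → ℕ) (R : ℝ)
    (hR0 : 0 < R) (hR1 : R < 1)
    (hπ : ∀ n : ℕ, 1 ≤ n →
      (n : ℂ) * (π n : ℂ) =
        ∑ d' ∈ n.divisors, (ArithmeticFunction.moebius d' : ℂ) * (W ^ (n / d')).trace)
    (hspec : ∀ lam ∈ spectrum ℂ W, ‖lam‖ ≤ 1 / R) :
    ∀ n : ℕ, 1 ≤ n →
      ‖(n : ℂ) * (π n : ℂ) - (W ^ n).trace‖ ≤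
        (d : ℝ) * n * (1 / R) ^ ((n : ℝ) / 2) := by
  intro n hn
  have hsplit : (n : ℂ) * (π n : ℂ) - (W ^ n).trace =
      ∑ k ∈ n.divisors.erase 1, (ArithmeticFunction.moebius k : ℂ) * (W ^ (n / k)).trace := by
    rw [hπ n hn, ← add_sum_erase _ _ (Nat.one_mem_divisors.mpr (by omega))]
    simp only [ArithmeticFunction.moebius_apply_one, Int.cast_one, one_mul, Nat.div_one,
      add_sub_cancel_left]
  rw [hsplit, mul_comm (d : ℝ), mul_assoc]
  refine norm_sum_divisors_erase_one_moebius_mul_le (a := fun m ↦ (W ^ m).trace)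
    fun m hm ↦ ?_
  calc ‖(W ^ m).trace‖
      ≤ d * (1 / R) ^ m := by simpa only [Fintype.card_fin] using W.norm_trace_pow_le hspec m
    _ ≤ d * (1 / R) ^ ((n : ℝ) / 2) := by
      gcongr
      exact pow_le_rpow_div_two (one_le_one_div hR0 hR1.le) hm
end

section
/- Let λ_1, …, λ_d be complex numbers and R > 0 real such that {λ_j : |λ_j| = 1/R} consists exactly of the Δ-th roots of unity divided by R (each with multiplicity one), and all other λ_j satisfy |λ_j| ≤ ρ < 1/R. Then as N → ∞, Σ_{n=1}^{N} (1/n)·Σ_{j=1}^{d} (λ_j R)^n = Σ_{m=1}^{⌊N/Δ⌋} 1/m + F + O((ρR)^N), where F := Σ_{|λ_j|<1/R} Σ_{n≥1} (λ_j R)^n/n = log ∏_{|λ_j|<1/R} (1 − λ_j R)^{−1}. -/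
/-!
The Δ terms with `|λ_j| = 1/R` are Δ-th roots of unity after scaling by `R`, so their `n`-th power
sums are `Δ` when `Δ ∣ n` and `0` otherwise; weighted by `1/n` they give exactly the harmonic sum
`∑_{m ≤ N/Δ} 1/m`. Every other `λ_j R` lies in the closed disc of radius `ρR < 1`, where the partial
sum of `∑ xⁿ/n` differs from the full series by a tail of size at most `(ρR)^{N+1}/(1 - ρR)`.
-/

open Finset Filter Asymptotics

theorem IsPrimitiveRoot.sum_pow_succ_pow {R : Type*} [CommRing R] [IsDomain R] {ζ : R} {k : ℕ}
    (hζ : IsPrimitiveRoot ζ k) (n : ℕ) :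
    ∑ a : Fin k, (ζ ^ ((a : ℕ) + 1)) ^ n = if k ∣ n then (k : R) else 0 := by
  have hw : ∀ a : ℕ, (ζ ^ (a + 1)) ^ n = ζ ^ n * (ζ ^ n) ^ a := fun a => by ring
  simp_rw [hw, ← mul_sum, Fin.sum_univ_eq_sum_range (fun a => (ζ ^ n) ^ a)]
  split_ifs with hkn
  · simp [(hζ.pow_eq_one_iff_dvd n).2 hkn]
  · have hne : ζ ^ n - 1 ≠ 0 := sub_ne_zero.2 fun h => hkn ((hζ.pow_eq_one_iff_dvd n).1 h)
    have hgeom : (∑ a ∈ range k, (ζ ^ n) ^ a) * (ζ ^ n - 1) = 0 := by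
      rw [geom_sum_mul, ← pow_mul, mul_comm, pow_mul, hζ.pow_eq_one, one_pow, sub_self]
    rw [(mul_eq_zero.1 hgeom).resolve_right hne, mul_zero]

theorem Nat.sum_Icc_filter_dvd {M : Type*} [AddCommMonoid M] (k N : ℕ) (f : ℕ → M) :
    ∑ n ∈ Icc 1 N with k ∣ n, f n = ∑ m ∈ Icc 1 (N / k), f (k * m) := by
  rcases k.eq_zero_or_pos with rfl | hk
  · rw [filter_eq_empty_iff.2 fun n hn => by simp [Nat.one_le_iff_ne_zero.1 (mem_Icc.1 hn).1]]
    simp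
  have hIcc : ∀ c, c ∈ Icc 1 (N / k) ↔ k * c ∈ Icc 1 N := fun c => by
    simp only [mem_Icc, Nat.le_div_iff_mul_le hk, Nat.one_le_iff_ne_zero, mul_ne_zero_iff,
      hk.ne', ne_eq, not_false_eq_true, true_and, mul_comm c]
  refine sum_nbij' (· / k) (k * ·) ?_ (fun m hm => mem_filter.2 ⟨(hIcc m).1 hm, dvd_mul_right k m⟩)
    ?_ (fun m _ => Nat.mul_div_cancel_left m hk) ?_
  all_goals
    simp only [mem_filter]
    rintro _ ⟨hn, c, rfl⟩
    simp only [Nat.mul_div_cancel_left c hk, hIcc, hn]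

section LogSeries

variable {𝕜 : Type*} [RCLike 𝕜]

theorem norm_pow_succ_div_natCast_succ_le (x : 𝕜) (n : ℕ) :
    ‖x ^ (n + 1) / ((n : 𝕜) + 1)‖ ≤ ‖x‖ ^ (n + 1) := by
  rw [norm_div, norm_pow, ← Nat.cast_succ, RCLike.norm_natCast]
  exact div_le_self (by positivity) (by simp)

theorem summable_pow_succ_div_natCast_succ {x : 𝕜} (hx : ‖x‖ < 1) :
    Summable fun n : ℕ => x ^ (n + 1) / ((n : 𝕜) + 1) :=
  .of_norm_bounded ((summable_geometric_of_lt_one (norm_nonneg x) hx).mul_left ‖x‖)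
    fun n => (norm_pow_succ_div_natCast_succ_le x n).trans_eq (pow_succ' _ _)

theorem sum_Icc_pow_div_sub_tsum {x : 𝕜} (hx : ‖x‖ < 1) (N : ℕ) :
    ∑ n ∈ Icc 1 N, x ^ n / n - ∑' n : ℕ, x ^ (n + 1) / ((n : 𝕜) + 1) =
      -∑' n : ℕ, x ^ (n + N + 1) / (((n + N : ℕ) : 𝕜) + 1) := by
  rw [← (summable_pow_succ_div_natCast_succ hx).sum_add_tsum_nat_add N,
    ← Ico_add_one_right_eq_Icc, sum_Ico_eq_sum_range]
  simp only [Nat.add_sub_cancel, add_comm 1, Nat.cast_add, Nat.cast_one]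
  ring

theorem norm_tsum_pow_div_tail_le {x : 𝕜} {r : ℝ} (hx : ‖x‖ ≤ r) (hr : r < 1) (N : ℕ) :
    ‖∑' n : ℕ, x ^ (n + N + 1) / (((n + N : ℕ) : 𝕜) + 1)‖ ≤ r ^ (N + 1) / (1 - r) := by
  have hr0 : 0 ≤ r := (norm_nonneg x).trans hx
  refine tsum_of_norm_bounded (g := fun n => r ^ (N + 1) * r ^ n)
    ((hasSum_geometric_of_lt_one hr0 hr).mul_left _) fun n => ?_
  calc _ ≤ ‖x‖ ^ (n + N + 1) := norm_pow_succ_div_natCast_succ_le x (n + N)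
    _ ≤ r ^ (n + N + 1) := pow_le_pow_left₀ (norm_nonneg x) hx _
    _ = r ^ (N + 1) * r ^ n := by ring

theorem isBigO_sum_Icc_pow_div_sub_tsum {x : 𝕜} {r : ℝ} (hx : ‖x‖ ≤ r) (hr : r < 1) :
    (fun N : ℕ => ∑ n ∈ Icc 1 N, x ^ n / n - ∑' n : ℕ, x ^ (n + 1) / ((n : 𝕜) + 1))
      =O[atTop] fun N => r ^ N := by
  have hr0 : 0 ≤ r := (norm_nonneg x).trans hx
  refine .of_bound (r / (1 - r)) (Eventually.of_forall fun N => ?_)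
  rw [sum_Icc_pow_div_sub_tsum (hx.trans_lt hr), norm_neg, Real.norm_of_nonneg (by positivity)]
  calc _ ≤ r ^ (N + 1) / (1 - r) := norm_tsum_pow_div_tail_le hx hr N
    _ = r / (1 - r) * r ^ N := by ring

end LogSeries

theorem sum_Icc_one_div_mul_sum_pow_eq_of_isPrimitiveRoot {K ι : Type*} [Field K] [CharZero K] [Fintype ι]
    [DecidableEq ι] {k : ℕ} {ζ : K} (hζ : IsPrimitiveRoot ζ k) {x : ι → K} (e : Fin k ↪ ι)
    (he : ∀ a, x (e a) = ζ ^ ((a : ℕ) + 1)) (N : ℕ) :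
    ∑ n ∈ Icc 1 N, 1 / (n : K) * ∑ j, x j ^ n =
      ∑ m ∈ Icc 1 (N / k), 1 / (m : K) + ∑ j ∈ (univ.map e)ᶜ, ∑ n ∈ Icc 1 N, x j ^ n / n := by
  have hsplit : ∀ n, ∑ j, x j ^ n = (if k ∣ n then (k : K) else 0) + ∑ j ∈ (univ.map e)ᶜ, x j ^ n :=
    fun n => by rw [← sum_add_sum_compl (univ.map e), sum_map, ← hζ.sum_pow_succ_pow]; simp only [he]
  simp_rw [hsplit, mul_add, sum_add_distrib, mul_ite, mul_zero, mul_sum, one_div_mul_eq_div]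
  rw [← sum_filter, Nat.sum_Icc_filter_dvd, sum_comm (s := Icc 1 N)]
  congr 1
  refine sum_congr rfl fun m hm => ?_
  have hk : k ≠ 0 := by
    rintro rfl
    simp [Nat.div_zero] at hm
  rw [Nat.cast_mul, div_mul_cancel_left₀ (Nat.cast_ne_zero.2 hk), one_div]

theorem keylemma_b (d Δ : ℕ) (hΔ : 1 ≤ Δ)
    (l : Fin d → ℂ) (R ρ : ℝ) (hR : 0 < R)
    (e : Fin Δ ↪ Fin d)
    (he : ∀ a : Fin Δ,
      l (e a) = Complex.exp (2 * Real.pi * Complex.I * ((a : ℕ) + 1) / Δ) / R)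
    (hsmall : ∀ j : Fin d, j ∉ Set.range e → ‖l j‖ ≤ ρ)
    (hρ : ρ < 1 / R) :
    (fun N : ℕ =>
        (∑ n ∈ Finset.Icc 1 N, (1 / (n : ℂ)) * ∑ j, (l j * R) ^ n) -
          (∑ m ∈ Finset.Icc 1 (N / Δ), (1 / (m : ℂ))) -
          ∑ j ∈ Finset.univ.filter (fun j => ‖l j‖ < 1 / R),
            ∑' n : ℕ, (l j * R) ^ (n + 1) / ((n : ℂ) + 1)) =O[Filter.atTop]
      (fun N : ℕ => (ρ * R) ^ N) := by
  have hζ := Complex.isPrimitiveRoot_exp Δ (by omega)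
  have hroots : ∀ a : Fin Δ,
      l (e a) * R = Complex.exp (2 * Real.pi * Complex.I / Δ) ^ ((a : ℕ) + 1) := fun a => by
    rw [he a, div_mul_cancel₀ _ (Complex.ofReal_ne_zero.2 hR.ne'), ← Complex.exp_nat_mul]
    push_cast
    ring_nf
  have hcircle : ∀ a, ‖l (e a)‖ = 1 / R := fun a => by
    rw [eq_div_iff hR.ne', ← Complex.norm_of_nonneg hR.le, ← norm_mul, hroots, norm_pow,
      hζ.norm'_eq_one (by omega), one_pow]
  have hS : univ.filter (fun j => ‖l j‖ < 1 / R) = (univ.map e)ᶜ := by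
    ext j
    simp only [mem_filter, mem_univ, true_and, mem_compl, Finset.mem_map]
    exact ⟨fun h ⟨a, ha⟩ => by rw [← ha, hcircle] at h; exact lt_irrefl _ h,
      fun h => (hsmall j h).trans_lt hρ⟩
  have hsmallS : ∀ j ∈ (univ.map e)ᶜ, ‖l j * R‖ ≤ ρ * R := fun j hj => by
    rw [norm_mul, Complex.norm_of_nonneg hR.le]
    exact mul_le_mul_of_nonneg_right (hsmall j (by simpa using hj)) hR.le
  refine (IsBigO.fun_sum fun j hj => isBigO_sum_Icc_pow_div_sub_tsum (hsmallS j hj)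
    ((lt_div_iff₀ hR).1 hρ)).congr_left fun N => ?_
  rw [hS, sum_Icc_one_div_mul_sum_pow_eq_of_isPrimitiveRoot hζ e hroots, sum_sub_distrib]
  ring
end
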